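/- The dual optimizer satisfies the norm bound ‖λ*c − μ*eₙ‖ ≤ (1 + d_max/d_min)·‖v‖, where d_max = max(d₁,…,dₙ), d_min = min(d₁,…,dₙ), and ‖·‖ is the Euclidean norm on ℝⁿ. -/

import Mathlib

/-!
The optimizer `λ*` is a weighted least-squares coefficient `⟨c, v⟩_s / ⟨c, c⟩_s`, where
`⟨f, g⟩_s = ∑_{i ∈ s} fᵢ gᵢ / dᵢ` (`wInner s d f g`) runs over all coordinates if `1_A = 0` and
over all but the last one if `1_A = 1`. In the first case `μ* = 0`; in the second the last
coordinate of `λ* c - μ* eₙ` is exactly `vₙ`. Weighted Cauchy–Schwarz gives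
`λ² ∑_s cᵢ² ≤ (d_max / d_min) ∑_s vᵢ²`, so in both cases
`‖λ* c - μ* eₙ‖² ≤ (1 + d_max / d_min) ‖v‖²`; as the factor is at least `1`, it also bounds its
own square root.
-/

open Finset

noncomputable section

namespace Stmt4

/-- The last index of `Fin (n+2)`. -/
def lastIdx (n : ℕ) : Fin (n + 2) := Fin.last (n + 1)

variable {n : ℕ}

/-- The Euclidean norm of a vector in `ℝ^m`. -/
def enorm {m : ℕ} (z : Fin m → ℝ) : ℝ := Real.sqrt (∑ i, z i ^ 2)

/-- `d_min = min(d₁,…,dₙ)`. -/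
def dMin (d : Fin (n + 2) → ℝ) : ℝ := Finset.univ.inf' Finset.univ_nonempty d

/-- `d_max = max(d₁,…,dₙ)`. -/
def dMax (d : Fin (n + 2) → ℝ) : ℝ := Finset.univ.sup' Finset.univ_nonempty d

/-- The `n`-th standard basis vector `eₙ`. -/
def eVec (n : ℕ) : Fin (n + 2) → ℝ := fun i => if i = lastIdx n then 1 else 0

/-- `c^⊤ D⁻¹ v` for the diagonal matrix `D = diag d`. -/
def cDv (d v c : Fin (n + 2) → ℝ) : ℝ := ∑ i, c i * v i / d i

/-- `c^⊤ D⁻¹ c` for the diagonal matrix `D = diag d`. -/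
def cDc (d c : Fin (n + 2) → ℝ) : ℝ := ∑ i, c i * c i / d i

/-- The indicator `1_A`. -/
def indA (d v c : Fin (n + 2) → ℝ) : ℝ :=
  if v (lastIdx n) - cDv d v c / cDc d c * c (lastIdx n) < 0 then 1 else 0

/-- `λ*`. -/
def lamStar (d v c : Fin (n + 2) → ℝ) : ℝ :=
  (cDv d v c - c (lastIdx n) * v (lastIdx n) / d (lastIdx n) * indA d v c) /
    (cDc d c - c (lastIdx n) ^ 2 / d (lastIdx n) * indA d v c)

/-- `μ* = max (-(vₙ - λ* cₙ)) 0`. -/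
def muStar (d v c : Fin (n + 2) → ℝ) : ℝ :=
  max (-(v (lastIdx n) - lamStar d v c * c (lastIdx n))) 0

section WeightedProjection

variable {ι : Type*} (s : Finset ι) (d : ι → ℝ)

def wInner (f g : ι → ℝ) : ℝ := ∑ i ∈ s, f i * g i / d i

def projCoeff (v c : ι → ℝ) : ℝ := wInner s d c v / wInner s d c c

variable {s d}

lemma wInner_self_nonneg (hd : ∀ i ∈ s, 0 < d i) (f : ι → ℝ) : 0 ≤ wInner s d f f :=
  sum_nonneg fun i hi => div_nonneg (mul_self_nonneg _) (hd i hi).le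

lemma wInner_sq_le (hd : ∀ i ∈ s, 0 < d i) (f g : ι → ℝ) :
    wInner s d f g ^ 2 ≤ wInner s d f f * wInner s d g g :=
  sum_sq_le_sum_mul_sum_of_sq_le_mul s
    (fun i hi => div_nonneg (mul_self_nonneg _) (hd i hi).le)
    (fun i hi => div_nonneg (mul_self_nonneg _) (hd i hi).le)
    (fun _ _ => le_of_eq (by ring))

lemma projCoeff_sq_mul_sum_sq_le {m M : ℝ} (hm : 0 < m) (hmM : m ≤ M)
    (hmd : ∀ i ∈ s, m ≤ d i) (hdM : ∀ i ∈ s, d i ≤ M) (v c : ι → ℝ) :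
    projCoeff s d v c ^ 2 * ∑ i ∈ s, c i ^ 2 ≤ M / m * ∑ i ∈ s, v i ^ 2 := by
  have hd : ∀ i ∈ s, 0 < d i := fun i hi => hm.trans_le (hmd i hi)
  have hM : 0 ≤ M := hm.le.trans hmM
  have hc : ∑ i ∈ s, c i ^ 2 ≤ M * wInner s d c c := by
    rw [wInner, mul_sum]
    refine sum_le_sum fun i hi => ?_
    rw [mul_div_assoc', le_div_iff₀ (hd i hi), sq, mul_comm M]
    exact mul_le_mul_of_nonneg_left (hdM i hi) (mul_self_nonneg _)
  have hv : wInner s d v v ≤ (∑ i ∈ s, v i ^ 2) / m := by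
    rw [wInner, sum_div]
    refine sum_le_sum fun i hi => ?_
    rw [← sq]
    exact div_le_div_of_nonneg_left (sq_nonneg _) hm (hmd i hi)
  have hcs : wInner s d c v ^ 2 / wInner s d c c ≤ wInner s d v v :=
    div_le_of_le_mul₀ (wInner_self_nonneg hd c) (wInner_self_nonneg hd v)
      ((wInner_sq_le hd c v).trans_eq (mul_comm _ _))
  calc projCoeff s d v c ^ 2 * ∑ i ∈ s, c i ^ 2
      ≤ projCoeff s d v c ^ 2 * (M * wInner s d c c) := by gcongr
    _ = M * (wInner s d c v ^ 2 / wInner s d c c) := by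
      rw [projCoeff]
      rcases eq_or_ne (wInner s d c c) 0 with h | h
      · simp [h]
      · field_simp
    _ ≤ M * wInner s d v v := by gcongr
    _ ≤ M * ((∑ i ∈ s, v i ^ 2) / m) := by gcongr
    _ = M / m * ∑ i ∈ s, v i ^ 2 := by ring

variable [DecidableEq ι]

lemma sub_projCoeff_mul_neg_of_insert {v c : ι → ℝ} {j : ι} (hj : j ∉ s) (hdj : 0 < d j)
    (hB : 0 < wInner s d c c) (h : v j - projCoeff (insert j s) d v c * c j < 0) :
    v j - projCoeff s d v c * c j < 0 := by
  have hB' : 0 < wInner (insert j s) d c c := by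
    rw [wInner, sum_insert hj]
    exact add_pos_of_nonneg_of_pos (div_nonneg (mul_self_nonneg _) hdj.le) hB
  have hmul : ∀ t : Finset ι, 0 < wInner t d c c →
      (v j - projCoeff t d v c * c j) * wInner t d c c =
        v j * wInner t d c c - c j * wInner t d c v := by
    intro t ht
    rw [projCoeff]
    field_simp
  -- adding the index `j` adds the same term `vⱼ cⱼ² / dⱼ` to both products
  have hcross : v j * wInner (insert j s) d c c - c j * wInner (insert j s) d c v =
      v j * wInner s d c c - c j * wInner s d c v := by
    simp only [wInner, sum_insert hj]
    ring
  have : (v j - projCoeff s d v c * c j) * wInner s d c c < 0 := by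
    rw [hmul s hB, ← hcross, ← hmul _ hB']
    exact mul_neg_of_neg_of_pos h hB'
  exact neg_of_mul_neg_left this hB.le

variable [Fintype ι]

lemma sum_sq_le_of_eqOn_projCoeff {m M : ℝ} (hm : 0 < m) (hmM : m ≤ M)
    (hmd : ∀ i ∈ s, m ≤ d i) (hdM : ∀ i ∈ s, d i ≤ M) {x v c : ι → ℝ}
    (hs : ∀ i ∈ s, x i = projCoeff s d v c * c i) (hsc : ∀ i ∉ s, x i = v i) :
    ∑ i, x i ^ 2 ≤ (1 + M / m) * ∑ i, v i ^ 2 := by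
  have hr : 0 ≤ M / m := div_nonneg (hm.le.trans hmM) hm.le
  have hin : ∑ i ∈ s, x i ^ 2 ≤ M / m * ∑ i ∈ s, v i ^ 2 := by
    rw [sum_congr rfl fun i hi => by rw [hs i hi, mul_pow], ← mul_sum]
    exact projCoeff_sq_mul_sum_sq_le hm hmM hmd hdM v c
  have hout : ∑ i ∈ sᶜ, x i ^ 2 = ∑ i ∈ sᶜ, v i ^ 2 :=
    sum_congr rfl fun i hi => by rw [hsc i (mem_compl.mp hi)]
  have hv₁ : 0 ≤ ∑ i ∈ s, v i ^ 2 := sum_nonneg fun i _ => sq_nonneg _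
  have hv₂ : 0 ≤ ∑ i ∈ sᶜ, v i ^ 2 := sum_nonneg fun i _ => sq_nonneg _
  rw [← sum_add_sum_compl s, ← sum_add_sum_compl s (fun i => v i ^ 2), hout]
  nlinarith

end WeightedProjection

lemma enorm_le_of_sum_sq_le {m : ℕ} {x v : Fin m → ℝ} {K : ℝ} (hK : 1 ≤ K)
    (h : ∑ i, x i ^ 2 ≤ K * ∑ i, v i ^ 2) : enorm x ≤ K * enorm v := by
  calc enorm x ≤ Real.sqrt (K * ∑ i, v i ^ 2) := Real.sqrt_le_sqrt h
    _ = Real.sqrt K * enorm v := Real.sqrt_mul (by linarith) _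
    _ ≤ K * enorm v :=
      mul_le_mul_of_nonneg_right (Real.sqrt_le_self_iff.mpr (Or.inr hK)) (Real.sqrt_nonneg _)

lemma dMin_pos {d : Fin (n + 2) → ℝ} (hd : ∀ i, 0 < d i) : 0 < dMin d :=
  (lt_inf'_iff _).mpr fun i _ => hd i

lemma dMin_le (d : Fin (n + 2) → ℝ) (i : Fin (n + 2)) : dMin d ≤ d i :=
  inf'_le _ (mem_univ i)

lemma le_dMax (d : Fin (n + 2) → ℝ) (i : Fin (n + 2)) : d i ≤ dMax d :=
  le_sup' _ (mem_univ i)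

lemma dMin_le_dMax (d : Fin (n + 2) → ℝ) : dMin d ≤ dMax d :=
  (dMin_le d 0).trans (le_dMax d 0)

section DualOptimizer

variable {d v c : Fin (n + 2) → ℝ}

lemma lamStar_of_not_neg (h : ¬ v (lastIdx n) - cDv d v c / cDc d c * c (lastIdx n) < 0) :
    lamStar d v c = projCoeff univ d v c := by
  rw [lamStar, indA, if_neg h, mul_zero, mul_zero, sub_zero, sub_zero]
  rfl

lemma muStar_of_not_neg (h : ¬ v (lastIdx n) - cDv d v c / cDc d c * c (lastIdx n) < 0) :
    muStar d v c = 0 := by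
  rw [muStar, lamStar_of_not_neg h]
  exact max_eq_right (neg_nonpos.mpr (not_lt.mp h))

lemma lamStar_of_neg (h : v (lastIdx n) - cDv d v c / cDc d c * c (lastIdx n) < 0) :
    lamStar d v c = projCoeff (univ.erase (lastIdx n)) d v c := by
  rw [lamStar, indA, if_pos h, mul_one, mul_one, projCoeff, wInner, wInner,
    sum_erase_eq_sub (mem_univ _), sum_erase_eq_sub (mem_univ _), sq]
  rfl

lemma muStar_of_neg (hd : ∀ i, 0 < d i) (hB : 0 < wInner (univ.erase (lastIdx n)) d c c)
    (h : v (lastIdx n) - cDv d v c / cDc d c * c (lastIdx n) < 0) :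
    muStar d v c = lamStar d v c * c (lastIdx n) - v (lastIdx n) := by
  have hneg : v (lastIdx n) - lamStar d v c * c (lastIdx n) < 0 := by
    rw [lamStar_of_neg h]
    refine sub_projCoeff_mul_neg_of_insert (notMem_erase _ _) (hd _) hB ?_
    rw [insert_erase (mem_univ _)]
    exact h
  rw [muStar, max_eq_left (by linarith)]
  ring

end DualOptimizer

/-- The dual optimizer satisfies `‖λ* c - μ* eₙ‖ ≤ (1 + d_max/d_min) ‖v‖`. -/
theorem dual_optimizer_norm_bound
    (n : ℕ) (d v c : Fin (n + 2) → ℝ)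
    (hd : ∀ i, 0 < d i)
    (hc : ∃ i : Fin (n + 2), i ≠ lastIdx n ∧ c i ≠ 0) :
    enorm (fun i => lamStar d v c * c i - muStar d v c * eVec n i) ≤
      (1 + dMax d / dMin d) * enorm v := by
  obtain ⟨i₀, hi₀L, hi₀⟩ := hc
  have hm := dMin_pos hd
  have hmM := dMin_le_dMax d
  have hB : 0 < wInner (univ.erase (lastIdx n)) d c c :=
    sum_pos' (fun i _ => div_nonneg (mul_self_nonneg _) (hd i).le)
      ⟨i₀, mem_erase.mpr ⟨hi₀L, mem_univ _⟩, div_pos (mul_self_pos.mpr hi₀) (hd i₀)⟩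
  refine enorm_le_of_sum_sq_le (le_add_of_nonneg_right (div_nonneg (hm.le.trans hmM) hm.le)) ?_
  by_cases h : v (lastIdx n) - cDv d v c / cDc d c * c (lastIdx n) < 0
  · refine sum_sq_le_of_eqOn_projCoeff (s := univ.erase (lastIdx n)) (c := c) hm hmM
      (fun i _ => dMin_le d i) (fun i _ => le_dMax d i) (fun i hi => ?_) (fun i hi => ?_)
    · rw [eVec, if_neg (ne_of_mem_erase hi), lamStar_of_neg h]
      ring
    · obtain rfl : i = lastIdx n := by simpa using hi
      rw [muStar_of_neg hd hB h, eVec, if_pos rfl]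
      ring
  · refine sum_sq_le_of_eqOn_projCoeff (s := univ) (c := c) hm hmM
      (fun i _ => dMin_le d i) (fun i _ => le_dMax d i) (fun i _ => ?_)
      (fun i hi => absurd (mem_univ i) hi)
    rw [muStar_of_not_neg h, lamStar_of_not_neg h]
    ring

end Stmt4
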